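/- Let F : [0,1] → ℝ be Lipschitz with supremum norm ‖F‖_∞ and Lipschitz constant ‖F‖_Lip, and define f : [0,1]ⁿ → ℝ by f(x) = (1/n) Σ_{i=1}ⁿ F(i/n)·x_{(i)}, where x_{(1)} ≤ … ≤ x_{(n)} is the order statistic of x. Then M(f) ≤ ‖F‖_∞/n and J(f) ≤ ‖F‖_Lip/n; that is, f has (‖F‖_∞, ‖F‖_Lip)-weak interactions. -/

import Mathlib

open MeasureTheory ProbabilityTheory

/-- Partial difference operator `D^k_{y,y'} f (x)`. -/
noncomputable def partialDiff {𝒳 : Type*} {n : ℕ} (f : (Fin n → 𝒳) → ℝ) (k : Fin n)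
    (y y' : 𝒳) (x : Fin n → 𝒳) : ℝ :=
  f (Function.update x k y) - f (Function.update x k y')

/-- The seminorm `M(f) = max_k sup_{x,y,y'} D^k_{y,y'} f(x)`. -/
noncomputable def Msem {𝒳 : Type*} {n : ℕ} (f : (Fin n → 𝒳) → ℝ) : ℝ :=
  ⨆ k : Fin n, ⨆ x : Fin n → 𝒳, ⨆ y : 𝒳, ⨆ y' : 𝒳, partialDiff f k y y' x

/-- The seminorm `J(f) = n · max_{l ≠ k} sup_{x,z,z',y,y'} D^l_{z,z'} D^k_{y,y'} f(x)`. -/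
noncomputable def Jsem {𝒳 : Type*} {n : ℕ} (f : (Fin n → 𝒳) → ℝ) : ℝ :=
  n * ⨆ k : Fin n, ⨆ l : Fin n, ⨆ _ : l ≠ k, ⨆ x : Fin n → 𝒳, ⨆ z : 𝒳, ⨆ z' : 𝒳,
      ⨆ y : 𝒳, ⨆ y' : 𝒳, partialDiff (partialDiff f k y y') l z z' x

/-!
Since the coordinates lie in `[0, 1]`, `x₍ᵢ₎ = ∫₀¹ 1[t ≤ x₍ᵢ₎] dt`, and `t ≤ x₍ᵢ₎` (with `i`
counted from `0`) holds exactly when at least `n - i` coordinates are `≥ t`. Hence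
`f x = ∫₀¹ G (N_t x) dt`, where `N_t x = #{j | t ≤ x j}` (`countAbove`) and `G m` (`upperSum`) is
the sum of the `m` weights `F (i/n) / n` of largest index.
Changing one coordinate moves `N_t` by at most one, so `D^k f` is bounded by an increment of `G`,
a single weight, at most `‖F‖_∞ / n`. Changing two coordinates turns `D^l D^k f` into an integral
of second differences of `G`, i.e. of differences of consecutive weights, at most `‖F‖_Lip / n²`.
-/

open Finset Function

section Seminorms

variable {𝒳 : Type*} {n : ℕ}

theorem Msem_le {f : (Fin n → 𝒳) → ℝ} {C : ℝ} (hC : 0 ≤ C)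
    (h : ∀ k x y y', partialDiff f k y y' x ≤ C) : Msem f ≤ C :=
  Real.iSup_le (fun k => Real.iSup_le (fun x => Real.iSup_le (fun y =>
    Real.iSup_le (fun y' => h k x y y') hC) hC) hC) hC

theorem Jsem_le {f : (Fin n → 𝒳) → ℝ} {C : ℝ} (hC : 0 ≤ C)
    (h : ∀ k l, l ≠ k → ∀ x z z' y y', partialDiff (partialDiff f k y y') l z z' x ≤ C) :
    Jsem f ≤ n * C :=
  mul_le_mul_of_nonneg_left (Real.iSup_le (fun k => Real.iSup_le (fun l => Real.iSup_le
    (fun hlk => Real.iSup_le (fun x => Real.iSup_le (fun z => Real.iSup_le (fun z' =>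
      Real.iSup_le (fun y => Real.iSup_le (fun y' => h k l hlk x z z' y y') hC) hC) hC) hC)
        hC) hC) hC) hC) n.cast_nonneg

theorem partialDiff_comp {𝒴 : Type*} (f : (Fin n → 𝒴) → ℝ) (φ : 𝒳 → 𝒴) (k : Fin n)
    (y y' : 𝒳) :
    partialDiff (fun x => f fun j => φ (x j)) k y y' =
      fun x => partialDiff f k (φ y) (φ y') fun j => φ (x j) := by
  funext x
  simp only [partialDiff, apply_update fun _ => φ]

end Seminorms

section Counting

variable {n : ℕ}

theorem Monotone.le_apply_iff_card_le {α : Type*} [LinearOrder α] {h : Fin n → α}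
    (hh : Monotone h) (t : α) (i : Fin n) : t ≤ h i ↔ n - i ≤ #{j | t ≤ h j} := by
  constructor
  · intro hi
    calc n - i = #(Ici i) := (Fin.card_Ici i).symm
      _ ≤ #{j | t ≤ h j} := card_le_card fun j hj => by
          simp only [mem_Ici] at hj
          simpa using hi.trans (hh hj)
  · intro hcard
    by_contra! hlt
    have hsub : #{j | t ≤ h j} ≤ #(Ioi i) := card_le_card fun j hj => by
      simp only [mem_filter, mem_univ, true_and] at hj
      exact mem_Ioi.mpr (lt_of_not_ge fun hji => (hj.trans (hh hji)).not_gt hlt)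
    rw [Fin.card_Ioi] at hsub
    omega

theorem card_filter_update_of_mem {ι α : Type*} [DecidableEq ι] (p : α → Prop) [DecidablePred p]
    (g : ι → α) {s : Finset ι} {k : ι} (hk : k ∈ s) (c : α) :
    #{j ∈ s | p (update g k c j)} = #{j ∈ s.erase k | p (g j)} + if p c then 1 else 0 := by
  rw [← insert_erase hk, filter_insert, update_self, erase_insert (notMem_erase k s)]
  have hfilter : {j ∈ s.erase k | p (update g k c j)} = {j ∈ s.erase k | p (g j)} :=
    filter_congr fun j hj => by rw [update_of_ne (ne_of_mem_erase hj)]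
  split_ifs <;> simp [hfilter]

noncomputable def countAbove (g : Fin n → ℝ) (t : ℝ) : ℕ := #{j | t ≤ g j}

theorem antitone_countAbove (g : Fin n → ℝ) : Antitone (countAbove g) :=
  fun _ _ hst => card_le_card <| monotone_filter_right _ fun _ _ htj => hst.trans htj

theorem le_sort_apply_iff (g : Fin n → ℝ) (t : ℝ) (i : Fin n) :
    t ≤ g (Tuple.sort g i) ↔ n - i ≤ countAbove g t := by
  have hcount : countAbove g t = #{j | t ≤ g (Tuple.sort g j)} := by
    simp only [countAbove, card_filter]
    exact (Equiv.sum_comp (Tuple.sort g) _).symm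
  rw [hcount]
  exact (Tuple.monotone_sort g).le_apply_iff_card_le t i

theorem exists_countAbove_update (g : Fin n → ℝ) (k : Fin n) (t : ℝ) :
    ∃ a, a + 1 ≤ n ∧ ∀ c, countAbove (update g k c) t = a + if t ≤ c then 1 else 0 := by
  refine ⟨#{j ∈ univ.erase k | t ≤ g j}, ?_, fun c => ?_⟩
  · have := card_filter_le (univ.erase k) fun j => t ≤ g j
    rw [card_erase_of_mem (mem_univ k), card_univ, Fintype.card_fin] at this
    have := k.pos
    omega
  · exact card_filter_update_of_mem (t ≤ ·) g (mem_univ k) c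

theorem exists_countAbove_update_update (g : Fin n → ℝ) {k l : Fin n} (hlk : l ≠ k) (t : ℝ) :
    ∃ b, b + 2 ≤ n ∧ ∀ c d, countAbove (update (update g l d) k c) t =
      b + (if t ≤ d then 1 else 0) + (if t ≤ c then 1 else 0) := by
  have hl : l ∈ univ.erase k := mem_erase.mpr ⟨hlk, mem_univ l⟩
  refine ⟨#{j ∈ (univ.erase k).erase l | t ≤ g j}, ?_, fun c d => ?_⟩
  · have := card_filter_le ((univ.erase k).erase l) fun j => t ≤ g j
    rw [card_erase_of_mem hl, card_erase_of_mem (mem_univ k), card_univ, Fintype.card_fin] at this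
    have : (l : ℕ) ≠ k := Fin.val_ne_of_ne hlk
    omega
  · rw [countAbove, card_filter_update_of_mem (t ≤ ·) _ (mem_univ k),
      card_filter_update_of_mem (t ≤ ·) g hl]

end Counting

section LevelSets

variable {n : ℕ}

noncomputable def levelSetIntegral (G : ℕ → ℝ) (g : Fin n → ℝ) : ℝ :=
  ∫ t in Set.Ioc 0 1, G (countAbove g t)

theorem integrableOn_comp_countAbove (G : ℕ → ℝ) (g : Fin n → ℝ) :
    IntegrableOn (fun t => G (countAbove g t)) (Set.Ioc 0 1) := by
  refine Integrable.of_bound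
    (measurable_from_nat.comp (antitone_countAbove g).measurable).aestronglyMeasurable
    (∑ m ∈ range (n + 1), |G m|) (ae_of_all _ fun t => ?_)
  have hcount : countAbove g t ∈ range (n + 1) :=
    mem_range.mpr (Nat.lt_succ_of_le ((card_filter_le _ _).trans_eq (by simp)))
  exact single_le_sum (f := fun m => |G m|) (fun _ _ => abs_nonneg _) hcount

theorem setIntegral_Ioc_le_of_abs_le {φ : ℝ → ℝ} {C : ℝ} (h : ∀ t, |φ t| ≤ C) :
    ∫ t in Set.Ioc 0 1, φ t ≤ C := by
  have hnorm := norm_setIntegral_le_of_norm_le_const (μ := volume) measure_Ioc_lt_top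
    fun t (_ : t ∈ Set.Ioc (0 : ℝ) 1) => (Real.norm_eq_abs (φ t)).trans_le (h t)
  rw [Real.volume_real_Ioc_of_le zero_le_one, sub_zero, mul_one] at hnorm
  exact (le_abs_self _).trans hnorm

theorem levelSetIntegral_sub_le {G : ℕ → ℝ} {C : ℝ} {g g' : Fin n → ℝ}
    (h : ∀ t, |G (countAbove g t) - G (countAbove g' t)| ≤ C) :
    levelSetIntegral G g - levelSetIntegral G g' ≤ C := by
  rw [levelSetIntegral, levelSetIntegral, ← integral_sub (integrableOn_comp_countAbove G g)
    (integrableOn_comp_countAbove G g')]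
  exact setIntegral_Ioc_le_of_abs_le h

theorem levelSetIntegral_mixed_sub_le {G : ℕ → ℝ} {C : ℝ} {g₁ g₂ g₃ g₄ : Fin n → ℝ}
    (h : ∀ t, |G (countAbove g₁ t) - G (countAbove g₂ t) -
      (G (countAbove g₃ t) - G (countAbove g₄ t))| ≤ C) :
    levelSetIntegral G g₁ - levelSetIntegral G g₂ -
      (levelSetIntegral G g₃ - levelSetIntegral G g₄) ≤ C := by
  have hint := integrableOn_comp_countAbove G (n := n)
  simp only [levelSetIntegral]
  rw [← integral_sub (hint g₁) (hint g₂), ← integral_sub (hint g₃) (hint g₄), ← integral_sub]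
  · exact setIntegral_Ioc_le_of_abs_le h
  all_goals exact (hint _).sub (hint _)

theorem abs_sub_le_of_abs_succ_sub_le {G : ℕ → ℝ} {C : ℝ} {a : ℕ}
    (hG : |G (a + 1) - G a| ≤ C) (p q : Prop) [Decidable p] [Decidable q] :
    |G (a + if p then 1 else 0) - G (a + if q then 1 else 0)| ≤ C := by
  have hC : 0 ≤ C := (abs_nonneg _).trans hG
  split_ifs <;> simp only [add_zero, sub_self, abs_zero]
  exacts [hC, hG, abs_sub_comm (G a) _ ▸ hG, hC]

theorem abs_mixed_sub_le_of_abs_second_diff_le {G : ℕ → ℝ} {C : ℝ} {a : ℕ}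
    (hG : |G (a + 2) - 2 * G (a + 1) + G a| ≤ C) (p q p' q' : Prop)
    [Decidable p] [Decidable q] [Decidable p'] [Decidable q'] :
    |G (a + (if p then 1 else 0) + (if q then 1 else 0)) -
        G (a + (if p then 1 else 0) + (if q' then 1 else 0)) -
      (G (a + (if p' then 1 else 0) + (if q then 1 else 0)) -
        G (a + (if p' then 1 else 0) + (if q' then 1 else 0)))| ≤ C := by
  have hC : 0 ≤ C := (abs_nonneg _).trans hG
  rw [abs_le] at hG ⊢
  split_ifs <;> simp only [add_zero, add_assoc, Nat.reduceAdd] <;> constructor <;> linarith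

theorem partialDiff_levelSetIntegral_le {G : ℕ → ℝ} {C : ℝ}
    (hG : ∀ m, m + 1 ≤ n → |G (m + 1) - G m| ≤ C) (g : Fin n → ℝ) (k : Fin n) (y y' : ℝ) :
    partialDiff (levelSetIntegral G) k y y' g ≤ C := by
  refine levelSetIntegral_sub_le fun t => ?_
  obtain ⟨a, ha, hcount⟩ := exists_countAbove_update g k t
  rw [hcount, hcount]
  exact abs_sub_le_of_abs_succ_sub_le (hG a ha) _ _

theorem partialDiff_partialDiff_levelSetIntegral_le {G : ℕ → ℝ} {C : ℝ}
    (hG : ∀ m, m + 2 ≤ n → |G (m + 2) - 2 * G (m + 1) + G m| ≤ C) (g : Fin n → ℝ)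
    {k l : Fin n} (hlk : l ≠ k) (y y' z z' : ℝ) :
    partialDiff (partialDiff (levelSetIntegral G) k y y') l z z' g ≤ C := by
  refine levelSetIntegral_mixed_sub_le fun t => ?_
  obtain ⟨b, hb, hcount⟩ := exists_countAbove_update_update g hlk t
  simp only [hcount]
  exact abs_mixed_sub_le_of_abs_second_diff_le (hG b hb) _ _ _ _

end LevelSets

section UpperSums

variable {n : ℕ}

def upperSum (w : Fin n → ℝ) (m : ℕ) : ℝ := ∑ i : Fin n with n - i.val ≤ m, w i

theorem upperSum_succ_sub (w : Fin n → ℝ) {m : ℕ} (hm : m < n) :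
    upperSum w (m + 1) - upperSum w m = w ⟨n - 1 - m, by omega⟩ := by
  simp only [upperSum, sum_filter, ← sum_sub_distrib]
  rw [← Fintype.sum_ite_eq' (⟨n - 1 - m, by omega⟩ : Fin n) w]
  refine sum_congr rfl fun i _ => ?_
  simp only [Fin.ext_iff]
  split_ifs <;> first | omega | simp

theorem abs_upperSum_succ_sub_le {w : Fin n → ℝ} {C : ℝ} (hw : ∀ i, |w i| ≤ C) {m : ℕ}
    (hm : m + 1 ≤ n) : |upperSum w (m + 1) - upperSum w m| ≤ C := by
  rw [upperSum_succ_sub w hm]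
  exact hw _

theorem abs_upperSum_second_diff_le {w : Fin n → ℝ} {C : ℝ}
    (hw : ∀ i j : Fin n, (j : ℕ) = i + 1 → |w i - w j| ≤ C) {m : ℕ} (hm : m + 2 ≤ n) :
    |upperSum w (m + 2) - 2 * upperSum w (m + 1) + upperSum w m| ≤ C := by
  rw [show upperSum w (m + 2) - 2 * upperSum w (m + 1) + upperSum w m =
      (upperSum w (m + 1 + 1) - upperSum w (m + 1)) - (upperSum w (m + 1) - upperSum w m) by ring,
    upperSum_succ_sub w (by omega : m + 1 < n), upperSum_succ_sub w (by omega : m < n)]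
  exact hw _ _ (by simp only; omega)

theorem setIntegral_Ioc_indicator_Iic (c : ℝ) {a : ℝ} (ha : a ∈ Set.Icc (0 : ℝ) 1) :
    ∫ t in Set.Ioc 0 1, (Set.Iic a).indicator (fun _ => c) t = a * c := by
  rw [integral_indicator_const c measurableSet_Iic, measureReal_restrict_apply measurableSet_Iic,
    Set.Iic_inter_Ioc_of_le ha.2, Real.volume_real_Ioc_of_le ha.1, sub_zero, smul_eq_mul]

theorem sum_mul_sort_eq_levelSetIntegral (w g : Fin n → ℝ) (hg : ∀ j, g j ∈ Set.Icc (0 : ℝ) 1) :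
    ∑ i, w i * g (Tuple.sort g i) = levelSetIntegral (upperSum w) g := by
  have hlevel : ∀ t, upperSum w (countAbove g t) =
      ∑ i, (Set.Iic (g (Tuple.sort g i))).indicator (fun _ => w i) t := by
    intro t
    simp only [upperSum, sum_filter, Set.indicator_apply, Set.mem_Iic, le_sort_apply_iff]
  simp only [levelSetIntegral, hlevel]
  rw [integral_finsetSum _ fun i _ => by
    exact (integrableOn_const measure_Ioc_lt_top.ne).indicator measurableSet_Iic]
  exact sum_congr rfl fun i _ => by rw [setIntegral_Ioc_indicator_Iic _ (hg _), mul_comm]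

end UpperSums

theorem succ_div_mem_Icc {n : ℕ} (i : Fin n) : ((i : ℕ) + 1 : ℝ) / n ∈ Set.Icc (0 : ℝ) 1 :=
  ⟨by positivity, div_le_one_of_le₀ (by exact_mod_cast i.isLt) n.cast_nonneg⟩

theorem abs_weight_sub_le {n : ℕ} {F : ℝ → ℝ} {L : ℝ}
    (hF : ∀ s ∈ Set.Icc (0 : ℝ) 1, ∀ t ∈ Set.Icc (0 : ℝ) 1, |F s - F t| ≤ L * |s - t|)
    {i j : Fin n} (hij : (j : ℕ) = i + 1) :
    |F (((i : ℕ) + 1) / n) / n - F (((j : ℕ) + 1) / n) / n| ≤ L / n ^ 2 := by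
  have hn : (0 : ℝ) < n := by exact_mod_cast j.pos
  have hstep : |((i : ℕ) + 1 : ℝ) / n - ((j : ℕ) + 1) / n| = 1 / n := by
    rw [hij, Nat.cast_succ, ← sub_div, abs_div, abs_of_pos hn]
    norm_num
  calc |F (((i : ℕ) + 1) / n) / n - F (((j : ℕ) + 1) / n) / n|
      = |F (((i : ℕ) + 1) / n) - F (((j : ℕ) + 1) / n)| / n := by
        rw [← sub_div, abs_div, abs_of_pos hn]
    _ ≤ L * (1 / n) / n := by
        gcongr
        rw [← hstep]
        exact hF _ (succ_div_mem_Icc i) _ (succ_div_mem_Icc j)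
    _ = L / n ^ 2 := by ring

/-- Lipschitz L-statistics have `(‖F‖_∞, ‖F‖_Lip)`-weak interactions:
`M(f) ≤ ‖F‖_∞/n` and `J(f) ≤ ‖F‖_Lip/n` for `f(x) = (1/n) Σ_i F(i/n)·x_{(i)}` on `[0,1]ⁿ`. -/
theorem Lstatistic_weak_interactions {n : ℕ} (F : ℝ → ℝ) (Fsup FLip : ℝ)
    (hFsup : ∀ t ∈ Set.Icc (0 : ℝ) 1, |F t| ≤ Fsup)
    (hFlip : ∀ s ∈ Set.Icc (0 : ℝ) 1, ∀ t ∈ Set.Icc (0 : ℝ) 1, |F s - F t| ≤ FLip * |s - t|)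
    (f : (Fin n → Set.Icc (0 : ℝ) 1) → ℝ)
    (hf : f = fun x => (1 / (n : ℝ)) *
      ∑ i : Fin n, F (((i : ℕ) + 1) / n) *
        (fun j => (x j : ℝ)) (Tuple.sort (fun j => (x j : ℝ)) i)) :
    Msem f ≤ Fsup / n ∧ Jsem f ≤ FLip / n := by
  set w : Fin n → ℝ := fun i => F (((i : ℕ) + 1) / n) / n
  have hlevel : f = fun x => levelSetIntegral (upperSum w) fun j => (x j : ℝ) := by
    subst hf
    funext x
    rw [← sum_mul_sort_eq_levelSetIntegral w _ fun j => (x j).2, mul_sum]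
    exact sum_congr rfl fun i _ => by simp only [w]; ring
  have hFsup0 : 0 ≤ Fsup := (abs_nonneg _).trans (hFsup 0 ⟨le_rfl, zero_le_one⟩)
  have hFLip0 : 0 ≤ FLip := by
    simpa using (abs_nonneg _).trans (hFlip 0 ⟨le_rfl, zero_le_one⟩ 1 ⟨zero_le_one, le_rfl⟩)
  subst hlevel
  constructor
  · refine Msem_le (by positivity) fun k x y y' => ?_
    rw [partialDiff_comp]
    refine partialDiff_levelSetIntegral_le
      (fun m hm => abs_upperSum_succ_sub_le (fun i => ?_) hm) _ _ _ _
    rw [abs_div, Nat.abs_cast]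
    exact div_le_div_of_nonneg_right (hFsup _ (succ_div_mem_Icc i)) n.cast_nonneg
  · calc Jsem _ ≤ n * (FLip / n ^ 2) := Jsem_le (by positivity) fun k l hlk x z z' y y' => by
          rw [partialDiff_comp, partialDiff_comp]
          refine partialDiff_partialDiff_levelSetIntegral_le (fun m hm => ?_) _ hlk _ _ _ _
          exact abs_upperSum_second_diff_le (fun i j hij => abs_weight_sub_le hFlip hij) hm
      _ = FLip / n := by rcases eq_or_ne (n : ℝ) 0 with h | h <;> field_simp [h]
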